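/- arXiv:cs/0611019 — 11 statements merged into one kernel-verified Lean document; each statement's English description precedes it below -/
import Mathlib

section
/- Let H be a homogeneous relation on X, M a homogeneous module of H, and N ⊆ M. Then N is a homogeneous module of the induced relation H[M] if and only if N is a homogeneous module of H. -/
/-- `H` is a homogeneous relation: for each `x`, the binary relation
`H x · ·` is an equivalence relation on the elements distinct from `x`. -/
def IsHomRel {X : Type*} (H : X → X → X → Prop) : Prop :=
  (∀ x y, y ≠ x → H x y y) ∧
  (∀ x y z, y ≠ x → z ≠ x → H x y z → H x z y) ∧
  (∀ x y z w, y ≠ x → z ≠ x → w ≠ x → H x y z → H x z w → H x y w)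

/-- `M` is a homogeneous module of `H`. -/
def IsModule {X : Type*} (H : X → X → X → Prop) (M : Set X) : Prop :=
  ∀ m ∈ M, ∀ m' ∈ M, ∀ x ∉ M, H x m m'

/-- Two sets overlap. -/
def Overlap {X : Type*} (A B : Set X) : Prop :=
  (A ∩ B).Nonempty ∧ (A \ B).Nonempty ∧ (B \ A).Nonempty

/-- `N` is a homogeneous module of the relation `H` induced on `A`. -/
def IsModuleIn {X : Type*} (H : X → X → X → Prop) (A N : Set X) : Prop :=
  ∀ m ∈ N, ∀ m' ∈ N, ∀ x ∈ A, x ∉ N → H x m m'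

theorem IsModule.isModuleIn {X : Type*} {H : X → X → X → Prop} {N : Set X}
    (hN : IsModule H N) (A : Set X) : IsModuleIn H A N :=
  fun m hm m' hm' x _ hx => hN m hm m' hm' x hx

theorem IsModuleIn.isModule {X : Type*} {H : X → X → X → Prop} {M N : Set X}
    (hN : IsModuleIn H M N) (hM : IsModule H M) (hNM : N ⊆ M) : IsModule H N := by
  intro m hm m' hm' x hx
  by_cases hxM : x ∈ M
  · exact hN m hm m' hm' x hxM hx
  · exact hM m (hNM hm) m' (hNM hm') x hxM

theorem stmt_1_general {X : Type*} (H : X → X → X → Prop)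
    (M : Set X) (hM : IsModule H M)
    (N : Set X) (hNM : N ⊆ M) :
    IsModuleIn H M N ↔ IsModule H N :=
  ⟨fun h => h.isModule hM hNM, fun h => h.isModuleIn M⟩

theorem stmt_1 {X : Type*} [Fintype X] (H : X → X → X → Prop)
    (hH : IsHomRel H) (M : Set X) (hM : IsModule H M)
    (N : Set X) (hNM : N ⊆ M) :
    IsModuleIn H M N ↔ IsModule H N :=
  stmt_1_general H M hM N hNM
end

section
/- If A and B are homogeneous modules of a homogeneous relation H and A overlaps B, then A∪B is a homogeneous module of H. -/
/-! Two modules sharing a point `c` merge: for `x` outside both, `H x m c` and `H x c m'` chain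
by transitivity of `H x` into `H x m m'`. -/

theorem IsHomRel.trans {X : Type*} {H : X → X → X → Prop} (hH : IsHomRel H) {x y z w : X}
    (hy : y ≠ x) (hz : z ≠ x) (hw : w ≠ x) (hyz : H x y z) (hzw : H x z w) : H x y w :=
  hH.2.2 x y z w hy hz hw hyz hzw

theorem IsModule.rel_of_mem_inter {X : Type*} {H : X → X → X → Prop} (hH : IsHomRel H)
    {A B : Set X} (hA : IsModule H A) (hB : IsModule H B) {m c m' x : X} (hm : m ∈ A)
    (hc : c ∈ A ∩ B) (hm' : m' ∈ B) (hxA : x ∉ A) (hxB : x ∉ B) : H x m m' :=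
  hH.trans (ne_of_mem_of_not_mem hm hxA) (ne_of_mem_of_not_mem hc.1 hxA)
    (ne_of_mem_of_not_mem hm' hxB) (hA m hm c hc.1 x hxA) (hB c hc.2 m' hm' x hxB)

theorem IsModule.union {X : Type*} {H : X → X → X → Prop} (hH : IsHomRel H) {A B : Set X}
    (hA : IsModule H A) (hB : IsModule H B) (hAB : (A ∩ B).Nonempty) : IsModule H (A ∪ B) := by
  obtain ⟨c, hc⟩ := hAB
  rintro m hm m' hm' x hx
  obtain ⟨hxA, hxB⟩ := not_or.mp hx
  rcases hm with hmA | hmB <;> rcases hm' with hm'A | hm'B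
  · exact hA m hmA m' hm'A x hxA
  · exact hA.rel_of_mem_inter hH hB hmA hc hm'B hxA hxB
  · exact hB.rel_of_mem_inter hH hA hmB hc.symm hm'A hxB hxA
  · exact hB m hmB m' hm'B x hxB

theorem stmt_3_general {X : Type*} (H : X → X → X → Prop)
    (hH : IsHomRel H) (A B : Set X) (hA : IsModule H A) (hB : IsModule H B)
    (hover : Overlap A B) : IsModule H (A ∪ B) :=
  hA.union hH hB hover.1

theorem stmt_3 {X : Type*} [Fintype X] (H : X → X → X → Prop)
    (hH : IsHomRel H) (A B : Set X) (hA : IsModule H A) (hB : IsModule H B)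
    (hover : Overlap A B) : IsModule H (A ∪ B) :=
  stmt_3_general H hH A B hA hB hover
end

section
/- Let H be a homogeneous relation on X and let M' be the family of homogeneous modules of H together with the empty set. Then (M', ⊆) is a lattice: any two members have an infimum and supremum with respect to inclusion. -/
/-!
The empty set satisfies the module condition vacuously, and any intersection of modules is a
module: a point outside `⋂₀ F` lies outside some `C ∈ F`, which contains all the points of the
intersection. So the modules form a Moore family (closed under all intersections, `∅` included),
with meet `A ∩ B` and join the intersection of all modules containing `A ∪ B`.
-/

section Modules

variable {X : Type*} {H : X → X → X → Prop}

theorem isModule_empty : IsModule H ∅ := by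
  simp [IsModule]

theorem isModule_sInter {F : Set (Set X)} (hF : ∀ C ∈ F, IsModule H C) :
    IsModule H (⋂₀ F) := by
  intro m hm m' hm' x hx
  obtain ⟨C, hCF, hxC⟩ : ∃ C ∈ F, x ∉ C := by simpa [Set.mem_sInter] using hx
  exact hF C hCF m (hm C hCF) m' (hm' C hCF) x hxC

theorem IsModule.inter {A B : Set X} (hA : IsModule H A) (hB : IsModule H B) :
    IsModule H (A ∩ B) := by
  simpa using isModule_sInter (F := {A, B}) (by simp [hA, hB])

theorem setOf_isModule_or_eq_empty :
    {M : Set X | IsModule H M ∨ M = ∅} = {M | IsModule H M} := by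
  ext M
  exact or_iff_left_of_imp fun h => h ▸ isModule_empty

theorem isLeast_sInter_isModule_superset (A B : Set X) :
    IsLeast {C | IsModule H C ∧ A ⊆ C ∧ B ⊆ C} (⋂₀ {C | IsModule H C ∧ A ⊆ C ∧ B ⊆ C}) :=
  ⟨⟨isModule_sInter fun _ hC => hC.1,
      Set.subset_sInter fun _ hC => hC.2.1, Set.subset_sInter fun _ hC => hC.2.2⟩,
    fun _ hC => Set.sInter_subset_of_mem hC⟩

end Modules

theorem stmt_4_general {X : Type*} (H : X → X → X → Prop) :
    ∀ A ∈ {M : Set X | IsModule H M ∨ M = ∅},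
      ∀ B ∈ {M : Set X | IsModule H M ∨ M = ∅},
        (∃ I ∈ {M : Set X | IsModule H M ∨ M = ∅}, I ⊆ A ∧ I ⊆ B ∧
          ∀ C ∈ {M : Set X | IsModule H M ∨ M = ∅}, C ⊆ A → C ⊆ B → C ⊆ I) ∧
        (∃ S ∈ {M : Set X | IsModule H M ∨ M = ∅}, A ⊆ S ∧ B ⊆ S ∧
          ∀ C ∈ {M : Set X | IsModule H M ∨ M = ∅}, A ⊆ C → B ⊆ C → S ⊆ C) := by
  simp only [setOf_isModule_or_eq_empty, Set.mem_ofPred_eq]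
  intro A hA B hB
  obtain ⟨⟨hS, hAS, hBS⟩, hS_least⟩ := isLeast_sInter_isModule_superset (H := H) A B
  exact ⟨⟨A ∩ B, hA.inter hB, Set.inter_subset_left, Set.inter_subset_right,
      fun _ _ => Set.subset_inter⟩,
    ⟨_, hS, hAS, hBS, fun C hC hAC hBC => hS_least ⟨hC, hAC, hBC⟩⟩⟩

theorem stmt_4 {X : Type*} [Fintype X] (H : X → X → X → Prop)
    (hH : IsHomRel H) :
    ∀ A ∈ {M : Set X | IsModule H M ∨ M = ∅},
      ∀ B ∈ {M : Set X | IsModule H M ∨ M = ∅},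
        (∃ I ∈ {M : Set X | IsModule H M ∨ M = ∅}, I ⊆ A ∧ I ⊆ B ∧
          ∀ C ∈ {M : Set X | IsModule H M ∨ M = ∅}, C ⊆ A → C ⊆ B → C ⊆ I) ∧
        (∃ S ∈ {M : Set X | IsModule H M ∨ M = ∅}, A ⊆ S ∧ B ⊆ S ∧
          ∀ C ∈ {M : Set X | IsModule H M ∨ M = ∅}, A ⊆ C → B ⊆ C → S ⊆ C) :=
  stmt_4_general H
end

section
/- Let H be a homogeneous relation on X and for a nonempty subset A ⊆ X let s(A) be the number of splitters of A (elements x ∉ A such that ¬H(x|aa') for some a,a' ∈ A). Then s satisfies the submodular inequality on intersecting subsets: s(A) + s(B) ≥ s(A∪B) + s(A∩B) for all A, B with A∩B ≠ ∅. -/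
/-- The set of splitters of `A`. -/
def splitters {X : Type*} (H : X → X → X → Prop) (A : Set X) : Set X :=
  {x | x ∉ A ∧ ∃ a ∈ A, ∃ a' ∈ A, ¬ H x a a'}

/-!
Fix `c ∈ A ∩ B`. If `x ∉ A ∪ B` separates `a, a' ∈ A ∪ B`, then by transitivity of `H_x` it
separates `c` from `a` or from `a'`; each such pair lies in `A` or in `B`, so `x` splits `A` or
`B`. A splitter of `A ∩ B` lies outside `A` or outside `B` and then splits that set, and a common
splitter of `A ∪ B` and `A ∩ B` splits both. Inclusion–exclusion turns these two inclusions into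
the submodular inequality.
-/

theorem Set.ncard_add_ncard_le_of_union_subset_of_inter_subset {α : Type*} [Finite α]
    {P Q S T : Set α} (hunion : P ∪ Q ⊆ S ∪ T) (hinter : P ∩ Q ⊆ S ∩ T) :
    P.ncard + Q.ncard ≤ S.ncard + T.ncard :=
  calc P.ncard + Q.ncard = (P ∪ Q).ncard + (P ∩ Q).ncard :=
        (Set.ncard_union_add_ncard_inter P Q).symm
    _ ≤ (S ∪ T).ncard + (S ∩ T).ncard :=
        Nat.add_le_add (Set.ncard_le_ncard hunion) (Set.ncard_le_ncard hinter)
    _ = S.ncard + T.ncard := Set.ncard_union_add_ncard_inter S T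

section Splitters

variable {X : Type*} {H : X → X → X → Prop} {A B : Set X} {x : X}

theorem IsHomRel.not_rel_or_not_rel (hH : IsHomRel H) {a a' c : X} (ha : a ≠ x) (ha' : a' ≠ x)
    (hc : c ≠ x) (h : ¬ H x a a') : ¬ H x a c ∨ ¬ H x a' c := by
  by_contra! ⟨hac, ha'c⟩
  exact h (hH.2.2 x a c a' ha hc ha' hac (hH.2.1 x a' c ha' hc ha'c))

theorem mem_splitters_of_subset {A' : Set X} (hA' : A' ⊆ A) (hx : x ∉ A)
    (hx' : x ∈ splitters H A') : x ∈ splitters H A := by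
  obtain ⟨-, a, ha, a', ha', h⟩ := hx'
  exact ⟨hx, a, hA' ha, a', hA' ha', h⟩

theorem mem_splitters_union_splitters_of_not_rel {a c : X} (hx : x ∉ A ∪ B) (ha : a ∈ A ∪ B)
    (hc : c ∈ A ∩ B) (h : ¬ H x a c) : x ∈ splitters H A ∪ splitters H B := by
  obtain ⟨hxA, hxB⟩ := not_or.mp hx
  rcases ha with ha | ha
  · exact .inl ⟨hxA, a, ha, c, hc.1, h⟩
  · exact .inr ⟨hxB, a, ha, c, hc.2, h⟩

theorem splitters_union_subset (hH : IsHomRel H) {c : X} (hc : c ∈ A ∩ B) :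
    splitters H (A ∪ B) ⊆ splitters H A ∪ splitters H B := by
  rintro x ⟨hx, a, ha, a', ha', h⟩
  have hne : ∀ {y}, y ∈ A ∪ B → y ≠ x := fun hy hyx => hx (hyx ▸ hy)
  rcases hH.not_rel_or_not_rel (hne ha) (hne ha') (hne (Or.inl hc.1)) h with h | h
  · exact mem_splitters_union_splitters_of_not_rel hx ha hc h
  · exact mem_splitters_union_splitters_of_not_rel hx ha' hc h

theorem splitters_inter_subset : splitters H (A ∩ B) ⊆ splitters H A ∪ splitters H B := by
  intro x hx
  rcases not_and_or.mp hx.1 with hxA | hxB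
  · exact .inl (mem_splitters_of_subset Set.inter_subset_left hxA hx)
  · exact .inr (mem_splitters_of_subset Set.inter_subset_right hxB hx)

theorem splitters_union_inter_splitters_inter_subset :
    splitters H (A ∪ B) ∩ splitters H (A ∩ B) ⊆ splitters H A ∩ splitters H B := by
  rintro x ⟨hU, hI⟩
  have hx : x ∉ A ∪ B := hU.1
  exact ⟨mem_splitters_of_subset Set.inter_subset_left (fun h => hx (.inl h)) hI,
    mem_splitters_of_subset Set.inter_subset_right (fun h => hx (.inr h)) hI⟩

end Splitters

theorem stmt_5 {X : Type*} [Fintype X] (H : X → X → X → Prop)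
    (hH : IsHomRel H) (A B : Set X) (hAB : (A ∩ B).Nonempty) :
    (splitters H (A ∪ B)).ncard + (splitters H (A ∩ B)).ncard ≤
      (splitters H A).ncard + (splitters H B).ncard := by
  obtain ⟨c, hc⟩ := hAB
  exact Set.ncard_add_ncard_le_of_union_subset_of_inter_subset
    (Set.union_subset (splitters_union_subset hH hc) splitters_inter_subset)
    splitters_union_inter_splitters_inter_subset
end

section
/- If H is a homogeneous relation on X and A, B are overlapping homogeneous modules, then any element s ∉ A∪B with no splitting inside A and no splitting inside B also does not split A∪B; that is, the set of splitters of A∪B that are not splitters of A is contained in the set of splitters of B that are not splitters of A∩B. -/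
/-!
An element `s` outside `A ∪ B` that splits neither `A` nor `B` relates, under `H s`, every
element of `A` and every element of `B` to a common point `c ∈ A ∩ B`; transitivity of `H s`
then relates any two elements of `A ∪ B`, so `s` does not split `A ∪ B`. Not splitting `A`
also means not splitting any subset of `A`, in particular `A ∩ B`.
-/

section

variable {X : Type*} {H : X → X → X → Prop}

theorem notMem_splitters_iff {S : Set X} {s : X} (hs : s ∉ S) :
    s ∉ splitters H S ↔ ∀ a ∈ S, ∀ a' ∈ S, H s a a' := by
  simp [splitters, hs]

theorem mem_splitters_of_subset_s6 {S T : Set X} {s : X} (hST : S ⊆ T)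
    (hS : s ∈ splitters H S) (hT : s ∉ T) : s ∈ splitters H T := by
  obtain ⟨-, a, ha, a', ha', hsplit⟩ := hS
  exact ⟨hT, a, hST ha, a', hST ha', hsplit⟩

theorem notMem_splitters_union (hH : IsHomRel H) {A B : Set X} {s : X}
    (hAB : (A ∩ B).Nonempty) (hs : s ∉ A ∪ B)
    (hsA : s ∉ splitters H A) (hsB : s ∉ splitters H B) : s ∉ splitters H (A ∪ B) := by
  obtain ⟨c, hcA, hcB⟩ := hAB
  have hA := (notMem_splitters_iff fun h => hs (Or.inl h)).1 hsA
  have hB := (notMem_splitters_iff fun h => hs (Or.inr h)).1 hsB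
  have hne : ∀ x ∈ A ∪ B, x ≠ s := fun x hx hxs => hs (hxs ▸ hx)
  have to_c : ∀ x ∈ A ∪ B, H s x c := by
    rintro x (hx | hx)
    exacts [hA x hx c hcA, hB x hx c hcB]
  refine (notMem_splitters_iff hs).2 fun a ha a' ha' => ?_
  have hc : c ≠ s := hne c (Or.inl hcA)
  exact hH.2.2 s a c a' (hne a ha) hc (hne a' ha') (to_c a ha)
    (hH.2.1 s a' c (hne a' ha') hc (to_c a' ha'))

end

theorem stmt_6_general {X : Type*} (H : X → X → X → Prop)
    (hH : IsHomRel H) (A B : Set X)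
    (hover : Overlap A B) :
    splitters H (A ∪ B) \ splitters H A ⊆
      splitters H B \ splitters H (A ∩ B) := by
  rintro s ⟨hsAB, hsA⟩
  have hs : s ∉ A ∪ B := hsAB.1
  refine ⟨⟨fun h => hs (Or.inr h), ?_⟩, fun hsI => hsA ?_⟩
  · by_contra hsB
    exact notMem_splitters_union hH hover.1 hs hsA (fun h => hsB h.2) hsAB
  · exact mem_splitters_of_subset_s6 Set.inter_subset_left hsI fun h => hs (Or.inl h)

theorem stmt_6 {X : Type*} [Fintype X] (H : X → X → X → Prop)
    (hH : IsHomRel H) (A B : Set X) (hA : IsModule H A) (hB : IsModule H B)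
    (hover : Overlap A B) :
    splitters H (A ∪ B) \ splitters H A ⊆
      splitters H B \ splitters H (A ∩ B) :=
  stmt_6_general H hH A B hover
end

section
/- For any homogeneous relation H on X and any two distinct elements x, y ∈ X, there exists a unique largest (with respect to inclusion) homogeneous module of H containing x but not y. -/
/-! The homogeneous modules containing `x` but not `y` all contain `x`, so their union is again
a homogeneous module: for `s` outside the union and `m`, `m'` in two of them, `H s m x` and
`H s x m'` chain by transitivity of `H s`. It contains `{x}` and avoids `y`, so it is the greatest
such module, and a greatest element is unique. -/

namespace IsHomRel

variable {X : Type*} {H : X → X → X → Prop}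

theorem isModule_singleton (hH : IsHomRel H) (a : X) : IsModule H {a} := by
  intro m hm m' hm' s hs
  rw [Set.mem_singleton_iff.1 hm, Set.mem_singleton_iff.1 hm']
  exact hH.1 s a (Ne.symm hs)

theorem isModule_sUnion_of_forall_mem (hH : IsHomRel H) {a : X} {F : Set (Set X)}
    (hF : ∀ M ∈ F, IsModule H M ∧ a ∈ M) : IsModule H (⋃₀ F) := by
  rintro m ⟨A, hA, hmA⟩ m' ⟨B, hB, hm'B⟩ s hs
  obtain ⟨hA_mod, haA⟩ := hF A hA
  obtain ⟨hB_mod, haB⟩ := hF B hB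
  have hsA : s ∉ A := fun h => hs ⟨A, hA, h⟩
  have hsB : s ∉ B := fun h => hs ⟨B, hB, h⟩
  exact hH.2.2 s m a m' (ne_of_mem_of_not_mem hmA hsA) (ne_of_mem_of_not_mem haA hsA)
    (ne_of_mem_of_not_mem hm'B hsB) (hA_mod m hmA a haA s hsA) (hB_mod a haB m' hm'B s hsB)

theorem isGreatest_sUnion_isModule (hH : IsHomRel H) {x y : X} (hxy : x ≠ y) :
    IsGreatest {M | IsModule H M ∧ x ∈ M ∧ y ∉ M}
      (⋃₀ {M | IsModule H M ∧ x ∈ M ∧ y ∉ M}) := by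
  refine ⟨⟨?_, ⟨{x}, ⟨hH.isModule_singleton x, rfl, Ne.symm hxy⟩, rfl⟩, ?_⟩,
    fun M hM => Set.subset_sUnion_of_mem hM⟩
  · exact hH.isModule_sUnion_of_forall_mem fun M hM => ⟨hM.1, hM.2.1⟩
  · rintro ⟨M, hM, hyM⟩
    exact hM.2.2 hyM

end IsHomRel

theorem stmt_7_general {X : Type*} (H : X → X → X → Prop)
    (hH : IsHomRel H) (x y : X) (hxy : x ≠ y) :
    ∃ Z : Set X,
      (IsModule H Z ∧ x ∈ Z ∧ y ∉ Z ∧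
        ∀ M : Set X, IsModule H M → x ∈ M → y ∉ M → M ⊆ Z) ∧
      ∀ Z' : Set X,
        (IsModule H Z' ∧ x ∈ Z' ∧ y ∉ Z' ∧
          ∀ M : Set X, IsModule H M → x ∈ M → y ∉ M → M ⊆ Z') → Z' = Z := by
  have hZ := hH.isGreatest_sUnion_isModule hxy
  refine ⟨_, ⟨hZ.1.1, hZ.1.2.1, hZ.1.2.2, fun M hM hxM hyM => hZ.2 ⟨hM, hxM, hyM⟩⟩, ?_⟩
  rintro Z' ⟨hZ'_mod, hxZ', hyZ', hZ'_max⟩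
  exact (hZ.unique ⟨⟨hZ'_mod, hxZ', hyZ'⟩, fun M hM => hZ'_max M hM.1 hM.2.1 hM.2.2⟩).symm

theorem stmt_7 {X : Type*} [Fintype X] (H : X → X → X → Prop)
    (hH : IsHomRel H) (x y : X) (hxy : x ≠ y) :
    ∃ Z : Set X,
      (IsModule H Z ∧ x ∈ Z ∧ y ∉ Z ∧
        ∀ M : Set X, IsModule H M → x ∈ M → y ∉ M → M ⊆ Z) ∧
      ∀ Z' : Set X,
        (IsModule H Z' ∧ x ∈ Z' ∧ y ∉ Z' ∧
          ∀ M : Set X, IsModule H M → x ∈ M → y ∉ M → M ⊆ Z') → Z' = Z :=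
  stmt_7_general H hH x y hxy
end

section
/- Every weakly graphic homogeneous relation is weakly digraphic. -/
def WeaklyGraphic {X : Type*} (H : X → X → X → Prop) : Prop :=
  ∀ x y z : X, x ≠ y → x ≠ z → y ≠ z → H y x z → H z x y → H x y z

def WeaklyDigraphic {X : Type*} (H : X → X → X → Prop) : Prop :=
  ∀ x y s t : X, x ≠ y → x ≠ s → x ≠ t → y ≠ s → y ≠ t → s ≠ t →
    H s x y → H t x y → H y s x → H y t x → H x s t

namespace IsHomRel

variable {X : Type*} {H : X → X → X → Prop}

theorem symm (hH : IsHomRel H) {x y z : X} (hy : y ≠ x) (hz : z ≠ x) (h : H x y z) :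
    H x z y :=
  hH.2.1 x y z hy hz h

theorem trans_s9 (hH : IsHomRel H) {x y z w : X} (hy : y ≠ x) (hz : z ≠ x) (hw : w ≠ x)
    (hyz : H x y z) (hzw : H x z w) : H x y w :=
  hH.2.2 x y z w hy hz hw hyz hzw

end IsHomRel

theorem WeaklyGraphic.rel_of_rel_of_rel {X : Type*} {H : X → X → X → Prop}
    (hwg : WeaklyGraphic H) (hH : IsHomRel H) {x y z : X} (hxy : x ≠ y) (hxz : x ≠ z)
    (hyz : y ≠ z) (hy : H y x z) (hz : H z y x) : H x y z :=
  hwg x y z hxy hxz hyz hy (hH.symm hyz hxz hz)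

theorem stmt_9_general {X : Type*} (H : X → X → X → Prop)
    (hH : IsHomRel H) (hwg : WeaklyGraphic H) : WeaklyDigraphic H := by
  intro x y s t hxy hxs hxt hys hyt _ hsxy htxy hysx hytx
  have hsy : H x s y := hwg.rel_of_rel_of_rel hH hxs hxy hys.symm hsxy hysx
  have hty : H x t y := hwg.rel_of_rel_of_rel hH hxt hxy hyt.symm htxy hytx
  exact hH.trans_s9 hxs.symm hxy.symm hxt.symm hsy (hH.symm hxt.symm hxy.symm hty)

theorem stmt_9 {X : Type*} [Fintype X] (H : X → X → X → Prop)
    (hH : IsHomRel H) (hwg : WeaklyGraphic H) : WeaklyDigraphic H :=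
  stmt_9_general H hH hwg
end

section
/- There exists a weakly graphic homogeneous relation that does not satisfy the modular quotient property. Concretely, on X = {x,y,s,t}, the homogeneous relation K given by the partitions K_x = {{y},{s},{t}}, K_y = {{x},{s,t}}, K_s = {{x,y},{t}}, K_t = {{x,y},{s}} is weakly graphic, {x,y} is a homogeneous module of K, but ¬K(x|st) while K(y|st). -/
/-- The relation `K` on `{x,y,s,t} = {0,1,2,3}` given by the partitions
`K_x = {{y},{s},{t}}`, `K_y = {{x},{s,t}}`, `K_s = {{x,y},{t}}`, `K_t = {{x,y},{s}}`. -/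
def K : Fin 4 → Fin 4 → Fin 4 → Prop := fun a u v =>
  u = v ∨
  (a = 1 ∧ (u = 2 ∨ u = 3) ∧ (v = 2 ∨ v = 3)) ∨
  ((a = 2 ∨ a = 3) ∧ (u = 0 ∨ u = 1) ∧ (v = 0 ∨ v = 1))

instance (a u v : Fin 4) : Decidable (K a u v) := by
  unfold K; infer_instance

theorem K_isHomRel : IsHomRel K := by
  unfold IsHomRel; decide

theorem K_weaklyGraphic : WeaklyGraphic K := by
  unfold WeaklyGraphic; decide

theorem K_isModule_pair : IsModule K ({0, 1} : Set (Fin 4)) := by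
  simp only [IsModule, Set.mem_insert_iff, Set.mem_singleton_iff]
  decide

theorem stmt_10 :
    IsHomRel K ∧ WeaklyGraphic K ∧ IsModule K ({0, 1} : Set (Fin 4)) ∧
      ¬ K 0 2 3 ∧ K 1 2 3 :=
  ⟨K_isHomRel, K_weaklyGraphic, K_isModule_pair, by decide, by decide⟩
end

section
/- A homogeneous relation H on X is the standard homogeneous relation of some undirected graph if and only if H is graphic, i.e. every element has congruence at most 2 and for every 3-element subset {a,b,c}, the induced relation H[{a,b,c}] has exactly 0 or 2 elements of congruence 2. -/
/-- `H` is graphic: local congruence at most 2, and on every triple of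
distinct elements exactly 0 or 2 elements have congruence 2 (an element `a`
has congruence 2 in `H[{a,b,c}]` iff `¬ H a b c`). -/
def Graphic {X : Type*} (H : X → X → X → Prop) : Prop :=
  (∀ x a b c : X, a ≠ x → b ≠ x → c ≠ x → H x a b ∨ H x a c ∨ H x b c) ∧
  (∀ a b c : X, a ≠ b → a ≠ c → b ≠ c →
    ((H a b c ∧ H b a c ∧ H c a b) ∨
     (H a b c ∧ ¬ H b a c ∧ ¬ H c a b) ∨
     (¬ H a b c ∧ H b a c ∧ ¬ H c a b) ∨
     (¬ H a b c ∧ ¬ H b a c ∧ H c a b)))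

/-- Auxiliary labelling: `auxA H x₀ p y` says `y` is on the "adjacent" side
of `x₀`, using `p` as reference (non-adjacent) element. -/
def auxA {X : Type*} (H : X → X → X → Prop) (x₀ p y : X) : Prop :=
  y ≠ p ∧ ¬ H x₀ y p

/-- Auxiliary adjacency relation built from a graphic homogeneous relation. -/
def auxAdj {X : Type*} (H : X → X → X → Prop) (x₀ p a b : X) : Prop :=
  a ≠ b ∧
    ((a = x₀ ∧ auxA H x₀ p b) ∨ (b = x₀ ∧ auxA H x₀ p a) ∨
     (a ≠ x₀ ∧ b ≠ x₀ ∧ ¬(auxA H x₀ p a ↔ ¬ H a x₀ b)))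

private lemma iffnot_aux (A P Q R : Prop) (h : (P ↔ Q) ↔ R) :
    R ↔ (¬(A ↔ ¬P) ↔ ¬(A ↔ ¬Q)) := by tauto

set_option maxHeartbeats 1000000 in
theorem stmt_14 {X : Type*} [Fintype X] (H : X → X → X → Prop)
    (hH : IsHomRel H) :
    (∃ G : SimpleGraph X, ∀ x u v : X, u ≠ x → v ≠ x →
        (H x u v ↔ (G.Adj x u ↔ G.Adj x v))) ↔ Graphic H := by
  obtain ⟨hrefl, hsymm, htrans⟩ := hH
  constructor
  · rintro ⟨G, hG⟩
    constructor
    · intro x a b c ha hb hc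
      have h1 := hG x a b ha hb
      have h2 := hG x a c ha hc
      have h3 := hG x b c hb hc
      tauto
    · intro a b c hab hac hbc
      have h1 := hG a b c (Ne.symm hab) (Ne.symm hac)
      have h2 := hG b a c hab (Ne.symm hbc)
      have h3 := hG c a b hac hbc
      have s1 : G.Adj b a ↔ G.Adj a b := G.adj_comm b a
      have s2 : G.Adj c a ↔ G.Adj a c := G.adj_comm c a
      have s3 : G.Adj c b ↔ G.Adj b c := G.adj_comm c b
      tauto
  · rintro ⟨hg1, hg2⟩
    by_cases hex : ∃ x₀ q : X, q ≠ x₀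
    · obtain ⟨x₀, p, hpx⟩ := hex
      -- two-class lemma
      have L1 : ∀ x q u v : X, q ≠ x → u ≠ x → v ≠ x →
          ((H x u q ↔ H x v q) ↔ H x u v) := by
        intro x q u v hq hu hv
        have h1 := hg1 x u v q hu hv hq
        constructor
        · intro h
          by_cases huq : H x u q
          · exact htrans x u q v hu hq hv huq (hsymm x v q hv hq (h.mp huq))
          · tauto
        · intro h
          constructor
          · intro huq
            exact htrans x v u q hv hu hq (hsymm x u v hu hv h) huq
          · intro hvq
            exact htrans x u v q hu hv hq h hvq
      have key : ∀ w : X, w ≠ x₀ → (auxA H x₀ p w ↔ ¬ H x₀ w p) := by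
        intro w hw
        by_cases hwp : w = p
        · subst hwp
          simp [auxA, hrefl x₀ w hw]
        · exact ⟨fun h => h.2, fun h => ⟨hwp, h⟩⟩
      have star : ∀ u v : X, u ≠ x₀ → v ≠ x₀ →
          ((auxA H x₀ p u ↔ auxA H x₀ p v) ↔ H x₀ u v) := by
        intro u v hu hv
        have ku := key u hu
        have kv := key v hv
        have l1 := L1 x₀ p u v hpx hu hv
        tauto
      have parity : ∀ a b : X, a ≠ x₀ → b ≠ x₀ → a ≠ b →
          (¬(auxA H x₀ p a ↔ ¬ H a x₀ b) ↔ ¬(auxA H x₀ p b ↔ ¬ H b x₀ a)) := by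
        intro a b ha hb hab
        have hst := star a b ha hb
        have htr := hg2 x₀ a b (Ne.symm ha) (Ne.symm hb) hab
        have hs : H b a x₀ ↔ H b x₀ a :=
          ⟨hsymm b a x₀ hab (Ne.symm hb), hsymm b x₀ a (Ne.symm hb) hab⟩
        tauto
      have hsym : ∀ a b : X, auxAdj H x₀ p a b → auxAdj H x₀ p b a := by
        rintro a b ⟨hab, h⟩
        refine ⟨Ne.symm hab, ?_⟩
        rcases h with ⟨ha, hb⟩ | ⟨hb, ha⟩ | ⟨ha, hb, h⟩
        · exact Or.inr (Or.inl ⟨ha, hb⟩)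
        · exact Or.inl ⟨hb, ha⟩
        · exact Or.inr (Or.inr ⟨hb, ha, (parity a b ha hb hab).mp h⟩)
      refine ⟨⟨auxAdj H x₀ p, ⟨fun a b h => hsym a b h⟩, ⟨fun a h => h.1 rfl⟩⟩, ?_⟩
      intro x u v hu hv
      show H x u v ↔ (auxAdj H x₀ p x u ↔ auxAdj H x₀ p x v)
      by_cases hx : x = x₀
      · have ex : ∀ b : X, b ≠ x₀ → (auxAdj H x₀ p x₀ b ↔ auxA H x₀ p b) := by
          intro b hb
          constructor
          · rintro ⟨hne, ⟨_, h⟩ | ⟨h, _⟩ | ⟨h, _, _⟩⟩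
            · exact h
            · exact absurd h hb
            · exact absurd rfl h
          · intro h; exact ⟨Ne.symm hb, Or.inl ⟨rfl, h⟩⟩
        rw [hx]
        have hu' : u ≠ x₀ := hx ▸ hu
        have hv' : v ≠ x₀ := hx ▸ hv
        have eu := ex u hu'
        have ev := ex v hv'
        have := star u v hu' hv'
        clear hg1 hg2 hrefl hsymm htrans L1 key star parity hsym ex
        tauto
      · have adj_eq : ∀ b : X, b ≠ x →
            (auxAdj H x₀ p x b ↔
              ((b = x₀ ∧ auxA H x₀ p x) ∨ (b ≠ x₀ ∧ ¬(auxA H x₀ p x ↔ ¬ H x x₀ b)))) := by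
          intro b hb
          constructor
          · rintro ⟨hne, ⟨h, _⟩ | ⟨hb0, hAx⟩ | ⟨_, hb0, h⟩⟩
            · exact absurd h hx
            · exact Or.inl ⟨hb0, hAx⟩
            · exact Or.inr ⟨hb0, h⟩
          · rintro (⟨hb0, hAx⟩ | ⟨hb0, h⟩)
            · exact ⟨Ne.symm hb, Or.inr (Or.inl ⟨hb0, hAx⟩)⟩
            · exact ⟨Ne.symm hb, Or.inr (Or.inr ⟨hx, hb0, h⟩)⟩
        have eu := adj_eq u hu
        have ev := adj_eq v hv
        have hx0 : (x₀ : X) ≠ x := fun h => hx h.symm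
        by_cases hu0 : u = x₀
        · by_cases hv0 : v = x₀
          · have hH' : H x u v := by rw [hu0, hv0]; exact hrefl x x₀ hx0
            clear hg1 hg2 hrefl hsymm htrans L1 key star parity hsym adj_eq
            tauto
          · have hconv : H x u v ↔ H x x₀ v := by rw [hu0]
            clear hg1 hg2 hrefl hsymm htrans L1 key star parity hsym adj_eq
            tauto
        · by_cases hv0 : v = x₀
          · have hconv : H x u v ↔ H x u x₀ := by rw [hv0]
            have hs : H x u x₀ ↔ H x x₀ u :=
              ⟨hsymm x u x₀ hu hx0, hsymm x x₀ u hx0 hu⟩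
            clear hg1 hg2 hrefl hsymm htrans L1 key star parity hsym adj_eq
            tauto
          · have l1 := L1 x x₀ u v hx0 hu hv
            have hsu : H x u x₀ ↔ H x x₀ u :=
              ⟨hsymm x u x₀ hu hx0, hsymm x x₀ u hx0 hu⟩
            have hsv : H x v x₀ ↔ H x x₀ v :=
              ⟨hsymm x v x₀ hv hx0, hsymm x x₀ v hx0 hv⟩
            rw [hsu, hsv] at l1
            have eu' : auxAdj H x₀ p x u ↔ ¬(auxA H x₀ p x ↔ ¬ H x x₀ u) := by
              rw [eu]
              constructor
              · rintro (⟨h, _⟩ | ⟨_, h⟩)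
                · exact absurd h hu0
                · exact h
              · intro h; exact Or.inr ⟨hu0, h⟩
            have ev' : auxAdj H x₀ p x v ↔ ¬(auxA H x₀ p x ↔ ¬ H x x₀ v) := by
              rw [ev]
              constructor
              · rintro (⟨h, _⟩ | ⟨_, h⟩)
                · exact absurd h hv0
                · exact h
              · intro h; exact Or.inr ⟨hv0, h⟩
            rw [eu', ev']
            exact iffnot_aux _ _ _ _ l1
    · push_neg at hex
      refine ⟨⊥, ?_⟩
      intro x u v hu hv
      exact absurd (hex x u) hu
end

section
/- A homogeneous relation H on X is the standard homogeneous relation of some tournament if and only if H is tournamental, i.e. every element has congruence at most 2 and for every 3-element subset {a,b,c}, the induced relation H[{a,b,c}] has exactly 1 or 3 elements of congruence 2. -/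
/-- `H` is tournamental: local congruence at most 2, and on every triple of
distinct elements exactly 1 or 3 elements have congruence 2 (an element `a`
has congruence 2 in `H[{a,b,c}]` iff `¬ H a b c`). -/
def Tournamental {X : Type*} (H : X → X → X → Prop) : Prop :=
  (∀ x a b c : X, a ≠ x → b ≠ x → c ≠ x → H x a b ∨ H x a c ∨ H x b c) ∧
  (∀ a b c : X, a ≠ b → a ≠ c → b ≠ c →
    ((¬ H a b c ∧ ¬ H b a c ∧ ¬ H c a b) ∨
     (H a b c ∧ H b a c ∧ ¬ H c a b) ∨
     (H a b c ∧ ¬ H b a c ∧ H c a b) ∨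
     (¬ H a b c ∧ H b a c ∧ H c a b)))

/-!
Congruence at most 2 makes each `H x` a two-colouring, `H x u v ↔ (c x u ↔ c x v)`. A tournament
inducing `H` is then `G x u := (c x u ↔ s x)` for signs `s`, and asymmetry of `G` asks for
`(s u ↔ s v) ↔ ¬(c u v ↔ c v u)`. The triangle condition of a tournamental relation says that the
right-hand side holds an odd number of times around every triangle, and on a complete graph such
a relation always has the form `s u ↔ s v`: fix a base point `p` and let `s x` record its value
on `p x`.
-/

lemma odd_number_false_iff (A B C : Prop) :
    ((¬A ∧ ¬B ∧ ¬C) ∨ (A ∧ B ∧ ¬C) ∨ (A ∧ ¬B ∧ C) ∨ (¬A ∧ B ∧ C)) ↔ ¬(A ↔ (B ↔ C)) := by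
  by_cases A <;> by_cases B <;> by_cases C <;> simp_all

lemma exists_colouring_of_two_classes {α : Type*} {S : Set α} {R : α → α → Prop}
    (symm : ∀ u ∈ S, ∀ v ∈ S, R u v → R v u)
    (trans : ∀ u ∈ S, ∀ v ∈ S, ∀ w ∈ S, R u v → R v w → R u w)
    (two : ∀ a ∈ S, ∀ b ∈ S, ∀ c ∈ S, R a b ∨ R a c ∨ R b c) :
    ∃ c : α → Prop, ∀ u ∈ S, ∀ v ∈ S, R u v ↔ (c u ↔ c v) := by
  rcases S.eq_empty_or_nonempty with rfl | ⟨r, hr⟩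
  · exact ⟨fun _ => True, by simp⟩
  refine ⟨(R · r), fun u hu v hv => ⟨fun huv => ?_, fun hiff => ?_⟩⟩
  · exact ⟨fun hur => trans v hv u hu r hr (symm u hu v hv huv) hur, trans u hu v hv r hr huv⟩
  by_cases hur : R u r
  · exact trans u hu r hr v hv hur (symm v hv r hr (hiff.1 hur))
  · rcases two u hu v hv r hr with h | h | h
    · exact h
    · exact absurd h hur
    · exact absurd (hiff.2 h) hur

/-- `f a b ↔ (f a e ↔ f b e)` says that `f` holds an odd number of times on the triangle `a b e`. -/
lemma exists_agreement_of_odd_triangles {α : Type*} {f : α → α → Prop}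
    (symm : ∀ a b, a ≠ b → (f a b ↔ f b a))
    (odd : ∀ a b e, a ≠ b → a ≠ e → b ≠ e → (f a b ↔ (f a e ↔ f b e))) :
    ∃ s : α → Prop, ∀ u v, u ≠ v → (f u v ↔ (s u ↔ s v)) := by
  rcases isEmpty_or_nonempty α with _ | ⟨⟨p⟩⟩
  · exact ⟨fun _ => True, fun u => isEmptyElim u⟩
  refine ⟨fun x => x = p ∨ f p x, fun u v huv => ?_⟩
  by_cases hu : u = p <;> by_cases hv : v = p
  · exact absurd (hu.trans hv.symm) huv
  · subst hu
    simp [hv]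
  · subst hv
    simp [hu, symm u v huv]
  · simp only [hu, hv, false_or]
    rw [odd u v p huv hu hv, symm u p hu, symm v p hv]

section

variable {X : Type*} {H : X → X → X → Prop}

lemma IsHomRel.exists_colouring (hH : IsHomRel H)
    (hcong : ∀ x a b c : X, a ≠ x → b ≠ x → c ≠ x → H x a b ∨ H x a c ∨ H x b c) :
    ∃ c : X → X → Prop, ∀ x u v, u ≠ x → v ≠ x → (H x u v ↔ (c x u ↔ c x v)) := by
  choose c hc using fun x => exists_colouring_of_two_classes (S := {y | y ≠ x}) (R := H x)
    (fun u hu v hv => hH.2.1 x u v hu hv)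
    (fun u hu v hv w hw => hH.2.2 x u v w hu hv hw)
    (fun a ha b hb c hc => hcong x a b c ha hb hc)
  exact ⟨c, fun x u v hu hv => hc x u hu v hv⟩

lemma tournamental_of_tournament (G : X → X → Prop)
    (hG : ∀ u v : X, u ≠ v → (G u v ↔ ¬ G v u))
    (hGH : ∀ x u v : X, u ≠ x → v ≠ x → (H x u v ↔ (G x u ↔ G x v))) :
    Tournamental H := by
  refine ⟨fun x a b c ha hb hc => ?_, fun a b c hab hac hbc => ?_⟩
  · rw [hGH x a b ha hb, hGH x a c ha hc, hGH x b c hb hc]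
    tauto
  · rw [odd_number_false_iff, hGH a b c hab.symm hac.symm, hGH b a c hab hbc.symm,
      hGH c a b hac hbc]
    have := hG a b hab
    have := hG a c hac
    have := hG b c hbc
    tauto

lemma Tournamental.exists_tournament (hH : IsHomRel H) (hT : Tournamental H) :
    ∃ G : X → X → Prop, (∀ u : X, ¬ G u u) ∧
      (∀ u v : X, u ≠ v → (G u v ↔ ¬ G v u)) ∧
      ∀ x u v : X, u ≠ x → v ≠ x → (H x u v ↔ (G x u ↔ G x v)) := by
  obtain ⟨c, hc⟩ := hH.exists_colouring hT.1
  obtain ⟨s, hs⟩ := exists_agreement_of_odd_triangles (f := fun u v => ¬(c u v ↔ c v u))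
    (fun a b _ => by tauto) fun a b e hab hae hbe => by
      have h := (odd_number_false_iff _ _ _).1 (hT.2 a b e hab hae hbe)
      rw [hc a b e hab.symm hae.symm, hc b a e hab hbe.symm, hc e a b hae hbe] at h
      tauto
  refine ⟨fun x u => u ≠ x ∧ (c x u ↔ s x), fun u h => h.1 rfl, fun u v huv => ?_,
    fun x u v hu hv => ?_⟩
  · have := hs u v huv
    simp only [ne_eq, huv, Ne.symm huv, not_false_eq_true, true_and]
    tauto
  · simp only [hc x u v hu hv, ne_eq, hu, hv, not_false_eq_true, true_and]
    tauto

end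

theorem stmt_15_general {X : Type*} (H : X → X → X → Prop)
    (hH : IsHomRel H) :
    (∃ G : X → X → Prop, (∀ u : X, ¬ G u u) ∧
        (∀ u v : X, u ≠ v → (G u v ↔ ¬ G v u)) ∧
        ∀ x u v : X, u ≠ x → v ≠ x → (H x u v ↔ (G x u ↔ G x v))) ↔
      Tournamental H :=
  ⟨fun ⟨G, _, hG, hGH⟩ => tournamental_of_tournament G hG hGH, fun hT => hT.exists_tournament hH⟩

theorem stmt_15 {X : Type*} [Fintype X] (H : X → X → X → Prop)
    (hH : IsHomRel H) :
    (∃ G : X → X → Prop, (∀ u : X, ¬ G u u) ∧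
        (∀ u v : X, u ≠ v → (G u v ↔ ¬ G v u)) ∧
        ∀ x u v : X, u ≠ x → v ≠ x → (H x u v ↔ (G x u ↔ G x v))) ↔
      Tournamental H :=
  stmt_15_general H hH
end

section
/- The family of homogeneous modules of a weakly digraphic homogeneous relation is weakly partitive: it contains X and all singletons, and is closed under union, intersection, and difference of overlapping members. -/
namespace IsModule

variable {X : Type*} {H : X → X → X → Prop} {A B : Set X}

theorem univ : IsModule H (Set.univ : Set X) :=
  fun _ _ _ _ x hx => absurd (Set.mem_univ x) hx

theorem singleton (hH : IsHomRel H) (x : X) : IsModule H {x} := by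
  rintro _ rfl _ rfl z hz
  exact hH.1 z _ (Ne.symm hz)

theorem inter_s16 (hA : IsModule H A) (hB : IsModule H B) : IsModule H (A ∩ B) := by
  intro m hm m' hm' x hx
  by_cases hxA : x ∈ A
  · exact hB m hm.2 m' hm'.2 x fun hxB => hx ⟨hxA, hxB⟩
  · exact hA m hm.1 m' hm'.1 x hxA

/-- Outside `A ∪ B`, every element of `A` is `H x`-equivalent to a common point of `A ∩ B`,
hence to every element of `B`. -/
theorem union_s16 (hH : IsHomRel H) (hA : IsModule H A) (hB : IsModule H B)
    (hAB : (A ∩ B).Nonempty) : IsModule H (A ∪ B) := by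
  obtain ⟨-, hsymm, htrans⟩ := hH
  obtain ⟨c, hcA, hcB⟩ := hAB
  intro m hm m' hm' x hx
  have hxA : x ∉ A := fun h => hx (Or.inl h)
  have hxB : x ∉ B := fun h => hx (Or.inr h)
  have across : ∀ u ∈ A, ∀ v ∈ B, H x u v := fun u hu v hv =>
    htrans x u c v (ne_of_mem_of_not_mem hu hxA) (ne_of_mem_of_not_mem hcA hxA)
      (ne_of_mem_of_not_mem hv hxB) (hA u hu c hcA x hxA) (hB c hcB v hv x hxB)
  rcases hm with hm | hm <;> rcases hm' with hm' | hm'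
  · exact hA m hm m' hm' x hxA
  · exact across m hm m' hm'
  · exact hsymm x m' m (ne_of_mem_of_not_mem hm' hxA) (ne_of_mem_of_not_mem hm hxB)
      (across m' hm' m hm)
  · exact hB m hm m' hm' x hxB

/-- The only nontrivial case is a point `x ∈ A ∩ B` and `m ≠ m'` in `A \ B`: a witness
`b ∈ B \ A` supplies exactly the four hypotheses of weak digraphicity for `x, b, m, m'`. -/
theorem diff (hH : IsHomRel H) (hwd : WeaklyDigraphic H) (hA : IsModule H A)
    (hB : IsModule H B) (hBA : (B \ A).Nonempty) : IsModule H (A \ B) := by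
  obtain ⟨b, hbB, hbA⟩ := hBA
  intro m hm m' hm' x hx
  by_cases hxA : x ∈ A
  swap
  · exact hA m hm.1 m' hm'.1 x hxA
  have hxB : x ∈ B := not_not.mp fun h => hx ⟨hxA, h⟩
  have hxm : x ≠ m := ne_of_mem_of_not_mem hxB hm.2
  rcases eq_or_ne m m' with rfl | hmm
  · exact hH.1 x m (Ne.symm hxm)
  exact hwd x b m m' (ne_of_mem_of_not_mem hxA hbA) hxm (ne_of_mem_of_not_mem hxB hm'.2)
    (ne_of_mem_of_not_mem hm.1 hbA).symm (ne_of_mem_of_not_mem hm'.1 hbA).symm hmm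
    (hB x hxB b hbB m hm.2) (hB x hxB b hbB m' hm'.2)
    (hA m hm.1 x hxA b hbA) (hA m' hm'.1 x hxA b hbA)

end IsModule

theorem stmt_16_general {X : Type*} (H : X → X → X → Prop)
    (hH : IsHomRel H) (hwd : WeaklyDigraphic H) :
    IsModule H (Set.univ : Set X) ∧
    (∀ x : X, IsModule H {x}) ∧
    ∀ A B : Set X, IsModule H A → IsModule H B → Overlap A B →
      IsModule H (A ∪ B) ∧ IsModule H (A ∩ B) ∧ IsModule H (A \ B) :=
  ⟨IsModule.univ, IsModule.singleton hH, fun _ _ hA hB ⟨hAB, _, hBA⟩ =>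
    ⟨hA.union_s16 hH hB hAB, hA.inter_s16 hB, hA.diff hH hwd hB hBA⟩⟩

theorem stmt_16 {X : Type*} [Fintype X] (H : X → X → X → Prop)
    (hH : IsHomRel H) (hwd : WeaklyDigraphic H) :
    IsModule H (Set.univ : Set X) ∧
    (∀ x : X, IsModule H {x}) ∧
    ∀ A B : Set X, IsModule H A → IsModule H B → Overlap A B →
      IsModule H (A ∪ B) ∧ IsModule H (A ∩ B) ∧ IsModule H (A \ B) :=
  stmt_16_general H hH hwd
end
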